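/- If every frontal slice of X ×₃ M is a symmetric N×N matrix, then X admits a tensor eigendecomposition X = Q ⋆ D ⋆ Qᵀ, where Q ∈ ℝ^{N×N×T} is orthogonal with respect to the M-product (Q ⋆ Qᵀ = Qᵀ ⋆ Q = I) and D is f-diagonal (each frontal slice of D ×₃ M is diagonal). -/

import Mathlib

open Finset

/-- The M-transform of an `I × J × T` tensor: `(X ×₃ M)_{ijt} = ∑ₖ M_{tk} X_{ijk}`. -/
def mtransform {I J T : ℕ} (M : Matrix (Fin T) (Fin T) ℝ)
    (X : Fin I → Fin J → Fin T → ℝ) : Fin I → Fin J → Fin T → ℝ :=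
  fun i j t => ∑ k, M t k * X i j k

/-- The facewise product: frontal-slice-wise matrix multiplication. -/
def facewise {I J K T : ℕ} (X : Fin I → Fin J → Fin T → ℝ)
    (Y : Fin J → Fin K → Fin T → ℝ) : Fin I → Fin K → Fin T → ℝ :=
  fun i k t => ∑ j, X i j t * Y j k t

/-- The M-product: `X ⋆ Y = ((X ×₃ M) △ (Y ×₃ M)) ×₃ M⁻¹`. -/
noncomputable def mprod {I J K T : ℕ} (M : Matrix (Fin T) (Fin T) ℝ)
    (X : Fin I → Fin J → Fin T → ℝ) (Y : Fin J → Fin K → Fin T → ℝ) :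
    Fin I → Fin K → Fin T → ℝ :=
  mtransform M⁻¹ (facewise (mtransform M X) (mtransform M Y))

/-- The identity tensor: `I = Î ×₃ M⁻¹` with each frontal slice of `Î` the identity matrix. -/
noncomputable def idTensor {N T : ℕ} (M : Matrix (Fin T) (Fin T) ℝ) : Fin N → Fin N → Fin T → ℝ :=
  mtransform M⁻¹ (fun i j _ => if i = j then (1 : ℝ) else 0)

/-- The tensor transpose: transpose each frontal slice in the transformed domain. -/
noncomputable def ttranspose {I J T : ℕ} (M : Matrix (Fin T) (Fin T) ℝ)
    (X : Fin I → Fin J → Fin T → ℝ) : Fin J → Fin I → Fin T → ℝ :=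
  mtransform M⁻¹ (fun j i t => mtransform M X i j t)

/-! Every frontal slice of `X ×₃ M` is a real symmetric matrix, hence orthogonally diagonalizable
by the spectral theorem. Since `×₃ M` is invertible and turns the M-product into the facewise
product and the tensor transpose into the slice-wise transpose, the slice-wise diagonalizations
`(X ×₃ M)ₜ = Uₜ Λₜ Uₜᵀ` pulled back by `×₃ M⁻¹` give `X = Q ⋆ D ⋆ Qᵀ`. -/

open Matrix

theorem Matrix.IsSymm.exists_orthogonal_diagonal {n : Type*} [Fintype n] [DecidableEq n]
    {A : Matrix n n ℝ} (hA : A.IsSymm) :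
    ∃ U ∈ orthogonalGroup n ℝ, ∃ d : n → ℝ, A = U * diagonal d * Uᵀ := by
  have hA' : A.IsHermitian := isHermitian_iff_isSymm.mpr hA
  refine ⟨hA'.eigenvectorUnitary, hA'.eigenvectorUnitary.2, hA'.eigenvalues, ?_⟩
  simpa [star_eq_conjTranspose] using hA'.spectral_theorem

section MTransform

variable {I J T : ℕ}

theorem mtransform_mtransform (A B : Matrix (Fin T) (Fin T) ℝ) (X : Fin I → Fin J → Fin T → ℝ) :
    mtransform A (mtransform B X) = mtransform (A * B) X := by
  funext i j t
  simp only [mtransform, mul_apply, Finset.sum_mul, Finset.mul_sum, mul_assoc]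
  exact Finset.sum_comm

theorem mtransform_one (X : Fin I → Fin J → Fin T → ℝ) : mtransform 1 X = X := by
  funext i j t
  simp [mtransform, one_apply, ite_mul]

variable {M : Matrix (Fin T) (Fin T) ℝ}

theorem mtransform_mtransform_inv (hM : IsUnit M.det) (X : Fin I → Fin J → Fin T → ℝ) :
    mtransform M (mtransform M⁻¹ X) = X := by
  rw [mtransform_mtransform, mul_nonsing_inv M hM, mtransform_one]

theorem mtransform_inv_mtransform (hM : IsUnit M.det) (X : Fin I → Fin J → Fin T → ℝ) :
    mtransform M⁻¹ (mtransform M X) = X := by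
  rw [mtransform_mtransform, nonsing_inv_mul M hM, mtransform_one]

end MTransform

section TransformedSlices

variable {I J K T : ℕ} {M : Matrix (Fin T) (Fin T) ℝ}

noncomputable def ofTransformedSlices (M : Matrix (Fin T) (Fin T) ℝ)
    (A : Fin T → Matrix (Fin I) (Fin J) ℝ) : Fin I → Fin J → Fin T → ℝ :=
  mtransform M⁻¹ fun i j t => A t i j

theorem mtransform_ofTransformedSlices (hM : IsUnit M.det)
    (A : Fin T → Matrix (Fin I) (Fin J) ℝ) (i : Fin I) (j : Fin J) (t : Fin T) :
    mtransform M (ofTransformedSlices M A) i j t = A t i j := by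
  rw [ofTransformedSlices, mtransform_mtransform_inv hM]

theorem eq_ofTransformedSlices (hM : IsUnit M.det) (X : Fin I → Fin J → Fin T → ℝ) :
    X = ofTransformedSlices M fun t => of fun i j => mtransform M X i j t :=
  (mtransform_inv_mtransform hM X).symm

theorem mprod_ofTransformedSlices (hM : IsUnit M.det)
    (A : Fin T → Matrix (Fin I) (Fin J) ℝ) (B : Fin T → Matrix (Fin J) (Fin K) ℝ) :
    mprod M (ofTransformedSlices M A) (ofTransformedSlices M B) =
      ofTransformedSlices M fun t => A t * B t := by
  simp only [mprod, ofTransformedSlices, mtransform_mtransform_inv hM]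
  rfl

theorem ttranspose_ofTransformedSlices (hM : IsUnit M.det)
    (A : Fin T → Matrix (Fin I) (Fin J) ℝ) :
    ttranspose M (ofTransformedSlices M A) = ofTransformedSlices M fun t => (A t)ᵀ := by
  simp only [ttranspose, mtransform_ofTransformedSlices hM]
  rfl

theorem idTensor_eq_ofTransformedSlices {N : ℕ} :
    (idTensor M : Fin N → Fin N → Fin T → ℝ) = ofTransformedSlices M fun _ => 1 := by
  simp only [idTensor, ofTransformedSlices, one_apply]

end TransformedSlices

/-- If every frontal slice of `X ×₃ M` is symmetric, then `X` admits a tensor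
eigendecomposition `X = Q ⋆ D ⋆ Qᵀ` with `Q` M-product orthogonal and `D` f-diagonal. -/
theorem tensor_eigendecomposition {N T : ℕ} (M : Matrix (Fin T) (Fin T) ℝ)
    (hM : IsUnit M.det) (X : Fin N → Fin N → Fin T → ℝ)
    (hX : ∀ i j t, mtransform M X i j t = mtransform M X j i t) :
    ∃ Q D : Fin N → Fin N → Fin T → ℝ,
      X = mprod M (mprod M Q D) (ttranspose M Q) ∧
      mprod M Q (ttranspose M Q) = idTensor M ∧
      mprod M (ttranspose M Q) Q = idTensor M ∧
      (∀ i j t, i ≠ j → mtransform M D i j t = 0) := by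
  have hsymm : ∀ t, (of fun i j => mtransform M X i j t).IsSymm :=
    fun t => IsSymm.ext fun i j => hX j i t
  choose U hU d hd using fun t => (hsymm t).exists_orthogonal_diagonal
  refine ⟨ofTransformedSlices M U, ofTransformedSlices M fun t => diagonal (d t),
    ?_, ?_, ?_, ?_⟩
  · rw [ttranspose_ofTransformedSlices hM, mprod_ofTransformedSlices hM,
      mprod_ofTransformedSlices hM, eq_ofTransformedSlices hM X]
    exact congrArg _ (funext hd)
  · rw [ttranspose_ofTransformedSlices hM, mprod_ofTransformedSlices hM,
      idTensor_eq_ofTransformedSlices]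
    exact congrArg _ (funext fun t => (mem_orthogonalGroup_iff _ _).mp (hU t))
  · rw [ttranspose_ofTransformedSlices hM, mprod_ofTransformedSlices hM,
      idTensor_eq_ofTransformedSlices]
    exact congrArg _ (funext fun t => (mem_orthogonalGroup_iff' _ _).mp (hU t))
  · intro i j t hij
    rw [mtransform_ofTransformedSlices hM, diagonal_apply_ne _ hij]
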